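/- Lemma 2.3 (Steklov smoothing with a periodic multiplier). Let f : ℝ^d → ℂ be Γ-periodic and measurable with ∫_Ω |f(x)|² dx < ∞. Then for every ε > 0 and every u ∈ L²(ℝ^d; ℂ^m), the function x ↦ f(x/ε)·(S_ε u)(x) belongs to L²(ℝ^d; ℂ^m) and ‖f(·/ε) S_ε u‖_{L²(ℝ^d;ℂ^m)} ≤ |Ω|^{−1/2} (∫_Ω |f(x)|² dx)^{1/2} ‖u‖_{L²(ℝ^d;ℂ^m)}. -/

import Mathlib

/-!
Cauchy–Schwarz on the cell gives `‖S_ε u x‖² ≤ |Ω|⁻¹ ∫_Ω ‖u (x - ε z)‖² dz`. Multiply by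
`|f (x/ε)|²`, integrate in `x` and swap the integrals: the substitution `x ↦ x + ε z` turns the
inner integral into `∫ |f (x/ε + z)|² ‖u x‖² dx`, and after swapping back, periodicity gives
`∫_Ω |f (y + z)|² dz = ∫_Ω |f|²` for every `y`, because a translate of a fundamental domain is again
a fundamental domain. Everything is done with `ℝ≥0∞`-valued integrals, so that finiteness is only
needed at the very end.
-/

open MeasureTheory Submodule
open scoped ENNReal Pointwise

noncomputable section

theorem ZSpan.fundamentalDomain_eq_setOf_sum_smul {ι E : Type*} [Fintype ι]
    [NormedAddCommGroup E] [NormedSpace ℝ E] (b : Module.Basis ι ℝ E) :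
    ZSpan.fundamentalDomain b =
      {x | ∃ t : ι → ℝ, (∀ i, 0 ≤ t i ∧ t i < 1) ∧ x = ∑ i, t i • b i} := by
  ext x
  simp only [ZSpan.mem_fundamentalDomain, Set.mem_Ico, Set.mem_ofPred_eq]
  constructor
  · exact fun h => ⟨b.repr x, h, (b.sum_repr x).symm⟩
  · rintro ⟨t, ht, rfl⟩
    simpa only [b.repr_sum_self] using ht

theorem MeasureTheory.IsAddFundamentalDomain.setLIntegral_comp_add_left {E : Type*} [AddCommGroup E]
    [MeasurableSpace E] [MeasurableAdd E] {μ : Measure E} [μ.IsAddLeftInvariant]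
    {L : AddSubgroup E} [Countable L] {s : Set E} (hs : IsAddFundamentalDomain L s μ)
    {G : E → ℝ≥0∞} (hG : ∀ γ ∈ L, ∀ x, G (γ + x) = G x) (c : E) :
    ∫⁻ z in s, G (c + z) ∂μ = ∫⁻ z in s, G z ∂μ := by
  have htranslate : ∫⁻ z in s, G (c + z) ∂μ = ∫⁻ z in c +ᵥ s, G z ∂μ :=
    (measurePreserving_add_left μ c).setLIntegral_comp_emb
      (MeasurableEquiv.addLeft c).measurableEmbedding G s
  rw [htranslate]
  exact (hs.vadd_of_comm c).setLIntegral_eq hs G fun γ x => hG γ γ.2 x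

theorem sq_lintegral_le_measure_univ_mul_lintegral_sq {α : Type*} [MeasurableSpace α]
    (μ : Measure α) (g : α → ℝ≥0∞) :
    (∫⁻ x, g x ∂μ) ^ 2 ≤ μ Set.univ * ∫⁻ x, g x ^ 2 ∂μ := by
  -- a measurable minorant with the same integral lets Hölder apply to an arbitrary `g`
  obtain ⟨h, h_meas, h_le, h_eq⟩ := exists_measurable_le_lintegral_eq μ g
  have hCS := ENNReal.lintegral_mul_le_Lp_mul_Lq μ Real.HolderConjugate.two_two
    aemeasurable_const h_meas.aemeasurable (f := fun _ => 1)
  simp only [Pi.mul_apply, one_mul, lintegral_const, one_pow,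
    ← ENNReal.mul_rpow_of_nonneg _ _ (by norm_num : (0:ℝ) ≤ 1 / 2), ENNReal.rpow_ofNat] at hCS
  calc (∫⁻ x, g x ∂μ) ^ 2 = (∫⁻ x, h x ∂μ) ^ 2 := by rw [h_eq]
    _ ≤ ((μ Set.univ * ∫⁻ x, h x ^ 2 ∂μ) ^ (1 / 2 : ℝ)) ^ 2 := pow_le_pow_left' hCS 2
    _ = μ Set.univ * ∫⁻ x, h x ^ 2 ∂μ := by
      rw [← ENNReal.rpow_natCast, ← ENNReal.rpow_mul]; norm_num
    _ ≤ μ Set.univ * ∫⁻ x, g x ^ 2 ∂μ := by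
      gcongr with x; exact h_le x

section Steklov

variable {E F : Type*} [NormedAddCommGroup E] [NormedSpace ℝ E] [MeasurableSpace E]
  [NormedAddCommGroup F] [NormedSpace ℝ F]

def steklov (μ : Measure E) (s : Set E) (ε : ℝ) (u : E → F) (x : E) : F :=
  (μ s).toReal⁻¹ • ∫ z in s, u (x - ε • z) ∂μ

theorem enorm_steklov_sq_le (μ : Measure E) {s : Set E} (hs₀ : μ s ≠ 0) (hs : μ s ≠ ∞)
    (ε : ℝ) (u : E → F) (x : E) :
    ‖steklov μ s ε u x‖ₑ ^ 2 ≤ (μ s)⁻¹ * ∫⁻ z in s, ‖u (x - ε • z)‖ₑ ^ 2 ∂μ := by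
  have hnorm : ‖(μ s).toReal⁻¹‖ₑ = (μ s)⁻¹ := by
    rw [← ENNReal.toReal_inv, Real.enorm_eq_ofReal ENNReal.toReal_nonneg,
      ENNReal.ofReal_toReal (ENNReal.inv_ne_top.2 hs₀)]
  calc ‖steklov μ s ε u x‖ₑ ^ 2
      = (μ s)⁻¹ ^ 2 * ‖∫ z in s, u (x - ε • z) ∂μ‖ₑ ^ 2 := by
        rw [steklov, enorm_smul, hnorm, mul_pow]
    _ ≤ (μ s)⁻¹ ^ 2 * (∫⁻ z in s, ‖u (x - ε • z)‖ₑ ∂μ) ^ 2 := by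
        gcongr; exact enorm_integral_le_lintegral_enorm _
    _ ≤ (μ s)⁻¹ ^ 2 * (μ s * ∫⁻ z in s, ‖u (x - ε • z)‖ₑ ^ 2 ∂μ) := by
        gcongr
        simpa only [Measure.restrict_apply_univ] using
          sq_lintegral_le_measure_univ_mul_lintegral_sq (μ.restrict s) _
    _ = (μ s)⁻¹ * ∫⁻ z in s, ‖u (x - ε • z)‖ₑ ^ 2 ∂μ := by
        rw [sq, mul_assoc, ← mul_assoc (μ s)⁻¹ (μ s), ENNReal.inv_mul_cancel hs₀ hs, one_mul]

variable [BorelSpace E] [SecondCountableTopology E] {μ : Measure E} [SFinite μ]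
  [μ.IsAddRightInvariant]

theorem ae_ae_comp_sub_smul {p : E → Prop} (hp : ∀ᵐ y ∂μ, p y) (ε : ℝ) (ν : Measure E)
    [SFinite ν] : ∀ᵐ x ∂μ, ∀ᵐ z ∂ν, p (x - ε • z) := by
  have hqmp : Measure.QuasiMeasurePreserving (fun q : E × E => q.1 - ε • q.2) (μ.prod ν) μ :=
    QuasiMeasurePreserving.prod_of_left (measurable_fst.sub (measurable_snd.const_smul ε))
      (ae_of_all _ fun z => (measurePreserving_sub_right μ (ε • z)).quasiMeasurePreserving)
  exact Measure.ae_ae_of_ae_prod (hqmp.ae hp)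

theorem steklov_congr_ae (s : Set E) (ε : ℝ) {u v : E → F} (huv : u =ᵐ[μ] v) :
    steklov μ s ε u =ᵐ[μ] steklov μ s ε v := by
  filter_upwards [ae_ae_comp_sub_smul huv ε (μ.restrict s)] with x hx
  rw [steklov, steklov, integral_congr_ae hx]

omit [μ.IsAddRightInvariant] in
theorem stronglyMeasurable_steklov {u : E → F} (hu : StronglyMeasurable u) (s : Set E) (ε : ℝ) :
    StronglyMeasurable (steklov μ s ε u) :=
  ((hu.comp_measurable (measurable_fst.sub (measurable_snd.const_smul ε))).integral_prod_right'
    (f := fun q : E × E => u (q.1 - ε • q.2))).const_smul _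

theorem aestronglyMeasurable_steklov {u : E → F} (hu : AEStronglyMeasurable u μ) (s : Set E)
    (ε : ℝ) : AEStronglyMeasurable (steklov μ s ε u) μ :=
  (stronglyMeasurable_steklov hu.stronglyMeasurable_mk s ε).aestronglyMeasurable.congr
    (steklov_congr_ae s ε hu.ae_eq_mk).symm

theorem lintegral_mul_setLIntegral_comp_sub_smul {G W : E → ℝ≥0∞} (hG : Measurable G)
    (hW : Measurable W) {s : Set E} (hG_inv : ∀ c, ∫⁻ z in s, G (c + z) ∂μ = ∫⁻ z in s, G z ∂μ)
    {ε : ℝ} (hε : ε ≠ 0) :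
    ∫⁻ x, G (ε⁻¹ • x) * ∫⁻ z in s, W (x - ε • z) ∂μ ∂μ =
      (∫⁻ z in s, G z ∂μ) * ∫⁻ x, W x ∂μ := by
  have hW_sub : Measurable fun q : E × E => W (q.1 - ε • q.2) :=
    hW.comp (measurable_fst.sub (measurable_snd.const_smul ε))
  calc ∫⁻ x, G (ε⁻¹ • x) * ∫⁻ z in s, W (x - ε • z) ∂μ ∂μ
      = ∫⁻ x, ∫⁻ z in s, G (ε⁻¹ • x) * W (x - ε • z) ∂μ ∂μ := by
        refine lintegral_congr fun x => (lintegral_const_mul _ ?_).symm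
        exact hW_sub.comp measurable_prodMk_left
    _ = ∫⁻ z in s, ∫⁻ x, G (ε⁻¹ • x) * W (x - ε • z) ∂μ ∂μ :=
        lintegral_lintegral_swap
          (((hG.comp (measurable_fst.const_smul ε⁻¹)).mul hW_sub).aemeasurable)
    _ = ∫⁻ z in s, ∫⁻ x, G (ε⁻¹ • x + z) * W x ∂μ ∂μ := by
        refine lintegral_congr fun z => ?_
        rw [← lintegral_add_right_eq_self _ (ε • z)]
        simp only [smul_add, smul_smul, inv_mul_cancel₀ hε, one_smul, add_sub_cancel_right]
    _ = ∫⁻ x, ∫⁻ z in s, G (ε⁻¹ • x + z) * W x ∂μ ∂μ :=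
        lintegral_lintegral_swap
          (((hG.comp ((measurable_snd.const_smul ε⁻¹).add measurable_fst)).mul
            (hW.comp measurable_snd)).aemeasurable)
    _ = (∫⁻ z in s, G z ∂μ) * ∫⁻ x, W x ∂μ := by
        rw [← lintegral_const_mul _ hW]
        refine lintegral_congr fun x => ?_
        rw [lintegral_mul_const _ (by fun_prop), hG_inv]

theorem lintegral_mul_enorm_steklov_sq_le {s : Set E} (hs₀ : μ s ≠ 0) (hs : μ s ≠ ∞)
    {G : E → ℝ≥0∞} (hG : Measurable G)
    (hG_inv : ∀ c, ∫⁻ z in s, G (c + z) ∂μ = ∫⁻ z in s, G z ∂μ)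
    {ε : ℝ} (hε : ε ≠ 0) {u : E → F} (hu : AEStronglyMeasurable u μ) :
    ∫⁻ x, G (ε⁻¹ • x) * ‖steklov μ s ε u x‖ₑ ^ 2 ∂μ ≤
      (μ s)⁻¹ * (∫⁻ z in s, G z ∂μ) * ∫⁻ x, ‖u x‖ₑ ^ 2 ∂μ := by
  obtain ⟨v, hv, huv⟩ := hu
  have hUv : ∫⁻ x, ‖u x‖ₑ ^ 2 ∂μ = ∫⁻ x, ‖v x‖ₑ ^ 2 ∂μ :=
    lintegral_congr_ae (huv.mono fun x hx => by simp only [hx])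
  calc ∫⁻ x, G (ε⁻¹ • x) * ‖steklov μ s ε u x‖ₑ ^ 2 ∂μ
      = ∫⁻ x, G (ε⁻¹ • x) * ‖steklov μ s ε v x‖ₑ ^ 2 ∂μ := by
        refine lintegral_congr_ae ?_
        filter_upwards [steklov_congr_ae s ε huv] with x hx
        rw [hx]
    _ ≤ ∫⁻ x, G (ε⁻¹ • x) * ((μ s)⁻¹ * ∫⁻ z in s, ‖v (x - ε • z)‖ₑ ^ 2 ∂μ) ∂μ := by
        gcongr with x
        exact enorm_steklov_sq_le μ hs₀ hs ε v x
    _ = (μ s)⁻¹ * ∫⁻ x, G (ε⁻¹ • x) * ∫⁻ z in s, ‖v (x - ε • z)‖ₑ ^ 2 ∂μ ∂μ := by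
        rw [← lintegral_const_mul' _ _ (ENNReal.inv_ne_top.2 hs₀)]
        simp_rw [mul_left_comm]
    _ = (μ s)⁻¹ * (∫⁻ z in s, G z ∂μ) * ∫⁻ x, ‖u x‖ₑ ^ 2 ∂μ := by
        rw [lintegral_mul_setLIntegral_comp_sub_smul hG (hv.enorm.pow_const 2) hG_inv hε, hUv,
          mul_assoc]

end Steklov

theorem memLp_two_iff_lintegral_enorm_sq_lt_top {α F : Type*} [MeasurableSpace α]
    {μ : Measure α} [NormedAddCommGroup F] {f : α → F} (hf : AEStronglyMeasurable f μ) :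
    MemLp f 2 μ ↔ ∫⁻ x, ‖f x‖ₑ ^ 2 ∂μ < ∞ := by
  rw [MemLp, and_iff_right hf,
    eLpNorm_lt_top_iff_lintegral_rpow_enorm_lt_top two_ne_zero ENNReal.ofNat_ne_top]
  simp only [ENNReal.toReal_ofNat, ENNReal.rpow_ofNat]

theorem integral_norm_sq_eq_toReal_lintegral {α F : Type*} [MeasurableSpace α]
    {μ : Measure α} [NormedAddCommGroup F] {f : α → F} (hf : AEStronglyMeasurable f μ) :
    ∫ x, ‖f x‖ ^ 2 ∂μ = (∫⁻ x, ‖f x‖ₑ ^ 2 ∂μ).toReal := by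
  rw [integral_eq_lintegral_of_nonneg_ae (ae_of_all _ fun _ => by positivity) (by fun_prop)]
  simp_rw [ENNReal.ofReal_pow (norm_nonneg _), ofReal_norm]

theorem ZSpan.lintegral_enorm_smul_steklov_sq_le {ι E F 𝕜 : Type*} [Finite ι]
    [NormedAddCommGroup E] [NormedSpace ℝ E] [MeasurableSpace E] [BorelSpace E]
    [NormedAddCommGroup F] [NormedSpace ℝ F] [RCLike 𝕜] [NormedSpace 𝕜 F]
    (μ : Measure E) [μ.IsAddHaarMeasure] (b : Module.Basis ι ℝ E) {f : E → 𝕜}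
    (hf : Measurable f) (hf_per : ∀ γ ∈ span ℤ (Set.range b), ∀ x, f (γ + x) = f x)
    {ε : ℝ} (hε : ε ≠ 0) {u : E → F} (hu : AEStronglyMeasurable u μ) :
    ∫⁻ x, ‖f (ε⁻¹ • x) • steklov μ (fundamentalDomain b) ε u x‖ₑ ^ 2 ∂μ ≤
      (μ (fundamentalDomain b))⁻¹ * (∫⁻ z in fundamentalDomain b, ‖f z‖ₑ ^ 2 ∂μ) *
        ∫⁻ x, ‖u x‖ₑ ^ 2 ∂μ := by
  have : FiniteDimensional ℝ E := b.finiteDimensional_of_finite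
  have : Countable (span ℤ (Set.range b)).toAddSubgroup :=
    inferInstanceAs (Countable (span ℤ (Set.range b)))
  simp_rw [enorm_smul, mul_pow]
  refine lintegral_mul_enorm_steklov_sq_le (measure_fundamentalDomain_ne_zero b)
    (fundamentalDomain_isBounded b).measure_lt_top.ne (by fun_prop) (fun c => ?_) hε hu
  exact (ZSpan.isAddFundamentalDomain' b μ).setLIntegral_comp_add_left
    (G := fun z => ‖f z‖ₑ ^ 2) (fun γ hγ x => by rw [hf_per γ hγ x]) c

theorem steklov_smoothing_periodic_multiplier_general
    (d m : ℕ)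
    (a : Fin d → EuclideanSpace ℝ (Fin d))
    (ha_indep : LinearIndependent ℝ a)
    (ha_span : Submodule.span ℝ (Set.range a) = ⊤)
    (Ω : Set (EuclideanSpace ℝ (Fin d)))
    (hΩ : Ω = {x | ∃ t : Fin d → ℝ, (∀ i, 0 ≤ t i ∧ t i < 1) ∧ x = ∑ i, t i • a i})
    (f : EuclideanSpace ℝ (Fin d) → ℂ)
    (hf_meas : Measurable f)
    (hf_per : ∀ (ν : Fin d → ℤ) (x : EuclideanSpace ℝ (Fin d)),
      f (x + ∑ i, (ν i : ℝ) • a i) = f x)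
    (hf_L2 : IntegrableOn (fun x => ‖f x‖ ^ 2) Ω volume)
    (ε : ℝ) (hε : 0 < ε)
    (u : EuclideanSpace ℝ (Fin d) → EuclideanSpace ℂ (Fin m))
    (hu : MemLp u 2 volume) :
    MemLp (fun x => f (ε⁻¹ • x) •
        ((volume Ω).toReal⁻¹ • ∫ z in Ω, u (x - ε • z))) 2 volume ∧
    Real.sqrt (∫ x, ‖f (ε⁻¹ • x) •
        ((volume Ω).toReal⁻¹ • ∫ z in Ω, u (x - ε • z))‖ ^ 2) ≤
      (Real.sqrt ((volume Ω).toReal))⁻¹ *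
      Real.sqrt (∫ x in Ω, ‖f x‖ ^ 2) *
      Real.sqrt (∫ x, ‖u x‖ ^ 2) := by
  simp only [← steklov.eq_1]
  set b := Module.Basis.mk ha_indep ha_span.ge
  have hΩb : Ω = ZSpan.fundamentalDomain b := by
    rw [hΩ, ZSpan.fundamentalDomain_eq_setOf_sum_smul, Module.Basis.coe_mk]
  have hf_per_span : ∀ γ ∈ span ℤ (Set.range b), ∀ x, f (γ + x) = f x := by
    intro γ hγ x
    obtain ⟨ν, rfl⟩ := (mem_span_range_iff_exists_fun ℤ).1 hγ
    simpa only [b, add_comm, Module.Basis.coe_mk, Int.cast_smul_eq_zsmul] using hf_per ν x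
  have hbound := ZSpan.lintegral_enorm_smul_steklov_sq_le volume b hf_meas hf_per_span hε.ne' hu.1
  rw [← hΩb] at hbound
  have hΩ₀ : volume Ω ≠ 0 := hΩb ▸ ZSpan.measure_fundamentalDomain_ne_zero b
  have hf_aesm := hf_meas.aestronglyMeasurable (μ := volume.restrict Ω)
  have hC := (memLp_two_iff_lintegral_enorm_sq_lt_top hf_aesm).1
    ((memLp_two_iff_integrable_sq_norm hf_aesm).2 hf_L2)
  have hU := (memLp_two_iff_lintegral_enorm_sq_lt_top hu.1).1 hu
  have hF : AEStronglyMeasurable (fun x => f (ε⁻¹ • x) • steklov volume Ω ε u x) volume :=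
    (hf_meas.comp (measurable_const_smul _)).aestronglyMeasurable.smul
      (aestronglyMeasurable_steklov hu.1 Ω ε)
  have hB : (volume Ω)⁻¹ * (∫⁻ z in Ω, ‖f z‖ₑ ^ 2) * ∫⁻ x, ‖u x‖ₑ ^ 2 ≠ ∞ :=
    ENNReal.mul_ne_top (ENNReal.mul_ne_top (ENNReal.inv_ne_top.2 hΩ₀) hC.ne) hU.ne
  refine ⟨(memLp_two_iff_lintegral_enorm_sq_lt_top hF).2 (hbound.trans_lt hB.lt_top), ?_⟩
  rw [integral_norm_sq_eq_toReal_lintegral hF, integral_norm_sq_eq_toReal_lintegral hf_aesm,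
    integral_norm_sq_eq_toReal_lintegral hu.1, ← Real.sqrt_inv, ← Real.sqrt_mul (by positivity),
    ← Real.sqrt_mul (by positivity), ← ENNReal.toReal_inv, ← ENNReal.toReal_mul,
    ← ENNReal.toReal_mul]
  exact Real.sqrt_le_sqrt (ENNReal.toReal_mono hB hbound)

/-- **Lemma 2.3 (Steklov smoothing with a periodic multiplier).**
Let `Γ ⊂ ℝ^d` be the lattice generated by a basis `a`, with fundamental
parallelepiped `Ω`.  Let `f : ℝ^d → ℂ` be `Γ`-periodic, measurable, with
`∫_Ω |f|² < ∞`.  Then for every `ε > 0` and `u ∈ L²(ℝ^d; ℂ^m)`, the function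
`x ↦ f(x/ε) (S_ε u)(x)` belongs to `L²(ℝ^d; ℂ^m)` and
`‖f(·/ε) S_ε u‖_{L²} ≤ |Ω|^{-1/2} (∫_Ω |f|²)^{1/2} ‖u‖_{L²}`, where
`(S_ε u)(x) = |Ω|⁻¹ ∫_Ω u(x - εz) dz` is the Steklov smoothing operator. -/
theorem steklov_smoothing_periodic_multiplier
    (d m : ℕ) (hd : 0 < d) (hm : 0 < m)
    (a : Fin d → EuclideanSpace ℝ (Fin d))
    (ha_indep : LinearIndependent ℝ a)
    (ha_span : Submodule.span ℝ (Set.range a) = ⊤)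
    (Ω : Set (EuclideanSpace ℝ (Fin d)))
    (hΩ : Ω = {x | ∃ t : Fin d → ℝ, (∀ i, 0 ≤ t i ∧ t i < 1) ∧ x = ∑ i, t i • a i})
    (f : EuclideanSpace ℝ (Fin d) → ℂ)
    (hf_meas : Measurable f)
    (hf_per : ∀ (ν : Fin d → ℤ) (x : EuclideanSpace ℝ (Fin d)),
      f (x + ∑ i, (ν i : ℝ) • a i) = f x)
    (hf_L2 : IntegrableOn (fun x => ‖f x‖ ^ 2) Ω volume)
    (ε : ℝ) (hε : 0 < ε)
    (u : EuclideanSpace ℝ (Fin d) → EuclideanSpace ℂ (Fin m))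
    (hu : MemLp u 2 volume) :
    MemLp (fun x => f (ε⁻¹ • x) •
        ((volume Ω).toReal⁻¹ • ∫ z in Ω, u (x - ε • z))) 2 volume ∧
    Real.sqrt (∫ x, ‖f (ε⁻¹ • x) •
        ((volume Ω).toReal⁻¹ • ∫ z in Ω, u (x - ε • z))‖ ^ 2) ≤
      (Real.sqrt ((volume Ω).toReal))⁻¹ *
      Real.sqrt (∫ x in Ω, ‖f x‖ ^ 2) *
      Real.sqrt (∫ x, ‖u x‖ ^ 2) :=
  steklov_smoothing_periodic_multiplier_general d m a ha_indep ha_span Ω hΩ f hf_meas hf_per hf_L2 ε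
    hε u hu

end
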